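/- arXiv:2506.15134 — 4 statements merged into one kernel-verified Lean document; each statement's English description precedes it below -/
import Mathlib

section
/- Let k be a perfect field of characteristic p > 0 and let V be a finite-dimensional (or countable-dimensional) permutation representation of a finite group G over k, i.e., V has a k-basis permuted by G. Then the invariant ring Sym(V)^G is Frobenius split: there exists an additive map Ψ : Sym(V)^G → Sym(V)^G with Ψ(a^p b) = a Ψ(b) for all a, b, and Ψ(a^p) = a for all a. -/
open MvPolynomial

section FSplitAux

variable (p : ℕ) [hp : Fact p.Prime] {k : Type*} [Field k] [CharP k p] [PerfectRing k p]
  {ι : Type*}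

lemma smul_finsupp_inj : Function.Injective (fun e : ι →₀ ℕ => p • e) := by
  intro a b h
  ext i
  have := congrArg (fun f : ι →₀ ℕ => f i) h
  simp only [Finsupp.smul_apply, smul_eq_mul] at this
  exact Nat.eq_of_mul_eq_mul_left hp.out.pos this

noncomputable def psiFun (f : MvPolynomial ι k) : MvPolynomial ι k :=
  AddMonoidAlgebra.ofCoeff (Finsupp.mapRange (⇑(frobeniusEquiv k p).symm) (map_zero _)
    (Finsupp.comapDomain (fun e : ι →₀ ℕ => p • e) (AddMonoidAlgebra.coeff f) ((smul_finsupp_inj p).injOn)))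

lemma coeff_psiFun (f : MvPolynomial ι k) (e : ι →₀ ℕ) :
    coeff e (psiFun p f) = (frobeniusEquiv k p).symm (coeff (p • e) f) := rfl

lemma psiFun_add (f g : MvPolynomial ι k) :
    psiFun p (f + g) = psiFun p f + psiFun p g := by
  ext e
  simp [coeff_psiFun, coeff_add, map_add]

lemma smul_le_smul_iff (d e : ι →₀ ℕ) : p • d ≤ p • e ↔ d ≤ e := by
  simp only [Finsupp.le_def, Finsupp.smul_apply, smul_eq_mul]
  have := hp.out.pos
  constructor <;> intro h i <;> have := h i <;> nlinarith [h i]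

lemma psmul_sub (d e : ι →₀ ℕ) : p • e - p • d = p • (e - d) := by
  ext i
  simp only [Finsupp.coe_tsub, Pi.sub_apply, Finsupp.smul_apply, smul_eq_mul]
  exact (Nat.mul_sub p (e i) (d i)).symm

lemma psiFun_monomial_pow_mul (d : ι →₀ ℕ) (c : k) (g : MvPolynomial ι k) :
    psiFun p ((monomial d c) ^ p * g) = monomial d c * psiFun p g := by
  ext e
  rw [coeff_psiFun, monomial_pow, coeff_monomial_mul', coeff_monomial_mul']
  by_cases h : d ≤ e
  · rw [if_pos ((smul_le_smul_iff p d e).mpr h), if_pos h, psmul_sub, map_mul,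
      coeff_psiFun]
    congr 1
    simp [frobenius_def]
  · rw [if_neg (fun hc => h ((smul_le_smul_iff p d e).mp hc)), if_neg h, map_zero]

lemma psiFun_pow_mul (f g : MvPolynomial ι k) :
    psiFun p (f ^ p * g) = f * psiFun p g := by
  haveI : CharP (MvPolynomial ι k) p := inferInstance
  induction f using MvPolynomial.induction_on' with
  | monomial d c => exact psiFun_monomial_pow_mul p d c g
  | add f₁ f₂ h1 h2 =>
    rw [add_pow_char, add_mul, psiFun_add, h1, h2, add_mul]

lemma psiFun_one : psiFun p (1 : MvPolynomial ι k) = 1 := by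
  classical
  ext e
  rw [coeff_psiFun]
  by_cases h : e = 0
  · subst h; simp
  · have h2 : ¬ (0 : ι →₀ ℕ) = p • e := by
      intro hc
      exact h ((smul_finsupp_inj p) (a₁ := e) (a₂ := 0) (by simpa using hc.symm))
    rw [coeff_one, coeff_one, if_neg (Ne.symm h), if_neg h2, map_zero]

lemma psiFun_rename (σ : Equiv.Perm ι) (f : MvPolynomial ι k) :
    psiFun p (rename σ f) = rename σ (psiFun p f) := by
  ext e
  set d : ι →₀ ℕ := e.mapDomain σ.symm with hd
  have he : e = d.mapDomain σ := by
    rw [hd, ← Finsupp.mapDomain_comp]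
    simp only [Function.comp_def, Equiv.apply_symm_apply]
    exact Finsupp.mapDomain_id.symm
  have hsmul : ∀ (m : ι →₀ ℕ), Finsupp.mapDomain (⇑σ) (p • m) = p • Finsupp.mapDomain (⇑σ) m :=
    fun m => Finsupp.mapDomain_smul p m
  rw [he, coeff_psiFun, coeff_rename_mapDomain _ σ.injective, ← hsmul,
    coeff_rename_mapDomain _ σ.injective, coeff_psiFun]

lemma psiFun_pow (f : MvPolynomial ι k) : psiFun p (f ^ p) = f := by
  have := psiFun_pow_mul p f 1
  rwa [mul_one, psiFun_one, mul_one] at this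

end FSplitAux

/-- Let `k` be a perfect field of characteristic `p > 0` and `G` a finite group
acting on an index set `ι` (so that `Sym(V) = k[X_i : i ∈ ι]` is a permutation representation,
`G` permuting the basis/variables). Then the invariant ring `Sym(V)^G` is Frobenius split:
there is an additive map `Ψ` on the invariant subalgebra with `Ψ(a^p * b) = a * Ψ(b)` and
`Ψ(a^p) = a`. -/
theorem invariants_of_permutation_rep_are_F_split
    (p : ℕ) [hp : Fact p.Prime] (k : Type*) [Field k] [CharP k p] [PerfectRing k p]
    (G : Type*) [Group G] [Finite G] (ι : Type*) [MulAction G ι]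
    (A : Subalgebra k (MvPolynomial ι k))
    (hA : ∀ f, f ∈ A ↔ ∀ g : G, rename (fun i => g • i) f = f) :
    ∃ Ψ : A → A,
      (∀ a b : A, Ψ (a + b) = Ψ a + Ψ b) ∧
      (∀ a b : A, Ψ (a ^ p * b) = a * Ψ b) ∧
      (∀ a : A, Ψ (a ^ p) = a) := by
  have hmem : ∀ f : MvPolynomial ι k, f ∈ A → psiFun p f ∈ A := by
    intro f hf
    rw [hA] at hf ⊢
    intro g
    have h1 : (fun i => g • i) = ⇑(MulAction.toPerm (β := ι) g) := by
      funext i; rfl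
    rw [h1, ← psiFun_rename, ← h1, hf g]
  refine ⟨fun a => ⟨psiFun p a.1, hmem _ a.2⟩, ?_, ?_, ?_⟩
  · intro a b
    apply Subtype.ext
    push_cast
    exact psiFun_add p a.1 b.1
  · intro a b
    apply Subtype.ext
    push_cast
    exact psiFun_pow_mul p a.1 b.1
  · intro a
    apply Subtype.ext
    push_cast
    exact psiFun_pow p a.1
end

section
/- Let k be a field of characteristic p > 0 and let A = k[x_1,...,x_p]^{S_p} be the ring of symmetric polynomials, graded with each x_i in degree 1. Define Ψ on the monomial-symmetric basis {T_m} by Ψ(T_m) = T_n if m = n^p and 0 otherwise. Then Ψ(fg^p) = g·Ψ(f) for all f, g ∈ A. -/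
open MvPolynomial

section Aux

variable (p : ℕ) [hp : Fact p.Prime] (k : Type*) [Field k] [CharP k p] [PerfectRing k p]

lemma psmul_injective : Function.Injective (fun n : Fin p →₀ ℕ => p • n) := by
  intro a b h
  ext i
  have := DFunLike.congr_fun h i
  simp only [Finsupp.smul_apply, smul_eq_mul] at this
  exact Nat.eq_of_mul_eq_mul_left hp.out.pos this

noncomputable def psi (f : MvPolynomial (Fin p) k) : MvPolynomial (Fin p) k :=
  MvPolynomial.map ((frobeniusEquiv k p).symm : k →+* k)
    (AddMonoidAlgebra.ofCoeff (Finsupp.comapDomain (fun n : Fin p →₀ ℕ => p • n) (AddMonoidAlgebra.coeff f) ((psmul_injective p).injOn)))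

lemma psi_coeff (f : MvPolynomial (Fin p) k) (n : Fin p →₀ ℕ) :
    coeff n (psi p k f) = (frobeniusEquiv k p).symm (coeff (p • n) f) := by
  simp only [psi, coeff_map]
  rfl

lemma psi_add (a b : MvPolynomial (Fin p) k) :
    psi p k (a + b) = psi p k a + psi p k b := by
  ext n
  simp [psi_coeff, coeff_add, map_add]

lemma psi_sum {ι : Type*} (s : Finset ι) (f : ι → MvPolynomial (Fin p) k) :
    psi p k (∑ i ∈ s, f i) = ∑ i ∈ s, psi p k (f i) := by
  ext n
  simp [psi_coeff, coeff_sum, map_sum]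

lemma psi_monomial_smul (n : Fin p →₀ ℕ) (c : k) :
    psi p k (monomial (p • n) c) = monomial n ((frobeniusEquiv k p).symm c) := by
  ext n'
  rw [psi_coeff, coeff_monomial, coeff_monomial]
  by_cases h : n = n'
  · simp [h]
  · rw [if_neg h, if_neg (fun hc => h (psmul_injective p hc)), map_zero]

lemma psi_monomial_not (m : Fin p →₀ ℕ) (hm : ¬ ∃ n, m = p • n) (c : k) :
    psi p k (monomial m c) = 0 := by
  ext n'
  rw [psi_coeff, coeff_monomial, if_neg (fun hc => hm ⟨n', hc⟩), map_zero, coeff_zero]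

omit hp in
lemma eqMD_smul (σ : Equiv.Perm (Fin p)) (n : Fin p →₀ ℕ) :
    Finsupp.equivMapDomain σ (p • n) = p • Finsupp.equivMapDomain σ n := by
  ext i
  simp

end Aux

/-- Let `k` be a field of characteristic `p > 0` and let
`A = k[x_1,…,x_p]^{S_p}`. For a monomial exponent `m`, `T m` denotes the orbit sum of the
monomial `x^m` under `S_p`; these form a basis of `A`. The map `Ψ` defined on this basis by
`Ψ(T m) = T n` if `m = p • n` and `0` otherwise (extended additively/`p`-th-root-semilinearly)
satisfies `Ψ(f g^p) = g Ψ(f)` for all symmetric `f, g`. -/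
theorem orbit_sum_splitting_semilinear (p : ℕ) [hp : Fact p.Prime]
    (k : Type*) [Field k] [CharP k p] [PerfectRing k p]
    (T : (Fin p →₀ ℕ) → MvPolynomial (Fin p) k)
    (hT : ∀ m, T m = ∑ m' ∈ Finset.image
      (fun σ : Equiv.Perm (Fin p) => Finsupp.equivMapDomain σ m) Finset.univ,
      monomial m' (1 : k)) :
    ∃ Ψ : MvPolynomial (Fin p) k → MvPolynomial (Fin p) k,
      (∀ a b, Ψ (a + b) = Ψ a + Ψ b) ∧
      (∀ m n : Fin p →₀ ℕ, m = p • n → Ψ (T m) = T n) ∧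
      (∀ m : Fin p →₀ ℕ, (¬ ∃ n, m = p • n) → Ψ (T m) = 0) ∧
      (∀ f g : MvPolynomial (Fin p) k, f.IsSymmetric → g.IsSymmetric →
        Ψ (f * g ^ p) = g * Ψ f) := by
  refine ⟨psi p k, psi_add p k, ?_, ?_, ?_⟩
  · -- divisible case
    rintro m n rfl
    rw [hT (p • n), hT n]
    have himg : Finset.image
        (fun σ : Equiv.Perm (Fin p) => Finsupp.equivMapDomain σ (p • n)) Finset.univ
        = Finset.image (fun n' => p • n')
          (Finset.image (fun σ : Equiv.Perm (Fin p) => Finsupp.equivMapDomain σ n)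
            Finset.univ) := by
      rw [Finset.image_image]
      exact Finset.image_congr fun σ _ => eqMD_smul p σ n
    rw [himg, Finset.sum_image (fun a _ b _ h => psmul_injective p h), psi_sum]
    exact Finset.sum_congr rfl fun n' _ => by
      rw [psi_monomial_smul, map_one]
  · -- non-divisible case
    intro m hm
    rw [hT m, psi_sum]
    refine Finset.sum_eq_zero fun m' hm' => ?_
    simp only [Finset.mem_image, Finset.mem_univ, true_and] at hm'
    obtain ⟨σ, rfl⟩ := hm'
    refine psi_monomial_not p k _ (fun ⟨n, hn⟩ => hm ⟨Finsupp.equivMapDomain σ.symm n, ?_⟩) 1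
    ext i
    have := DFunLike.congr_fun hn (σ i)
    simpa using this
  · -- main identity
    intro f g _ _
    have hle : ∀ b n : Fin p →₀ ℕ, p • b ≤ p • n ↔ b ≤ n := by
      intro b n
      simp only [Finsupp.le_def, Finsupp.smul_apply, smul_eq_mul]
      exact ⟨fun h i => Nat.le_of_mul_le_mul_left (h i) hp.out.pos,
        fun h i => Nat.mul_le_mul_left p (h i)⟩
    have hsub : ∀ b n : Fin p →₀ ℕ, p • n - p • b = p • (n - b) := by
      intro b n
      ext i
      simp [Nat.mul_sub]
    have hgp : g ^ p = ∑ b ∈ g.support, monomial (p • b) (coeff b g ^ p) := by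
      conv_lhs => rw [g.as_sum]
      rw [sum_pow_char]
      exact Finset.sum_congr rfl fun b _ => by rw [monomial_pow]
    ext n
    rw [psi_coeff, hgp, Finset.mul_sum, coeff_sum, map_sum]
    have hrhs : coeff n (g * psi p k f)
        = ∑ b ∈ g.support, coeff n (psi p k f * monomial b (coeff b g)) := by
      conv_lhs => rw [g.as_sum, Finset.sum_mul]
      rw [coeff_sum]
      exact Finset.sum_congr rfl fun b _ => by rw [mul_comm]
    rw [hrhs]
    refine Finset.sum_congr rfl fun b _ => ?_
    rw [coeff_mul_monomial', coeff_mul_monomial']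
    by_cases hb : b ≤ n
    · rw [if_pos hb, if_pos ((hle b n).mpr hb), map_mul, hsub, psi_coeff]
      congr 1
      rw [← frobenius_def, ← frobeniusEquiv_apply, RingEquiv.symm_apply_apply]
    · rw [if_neg hb, if_neg (fun hc => hb ((hle b n).mp hc)), map_zero]
end

section
/- Let k be a field of characteristic p > 0 and n < p. In k[x_1,...,x_n]^{S_n} (symmetric polynomials in fewer than p variables), for any symmetric f there exists a polynomial expression showing f^p is the image of f under the Frobenius, and the Frobenius splitting Ψ from the orbit-sum construction satisfies Ψ(T_m · T_{m'}^p) = T_{m'} · Ψ(T_m) for all monomials m, m'. -/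
open MvPolynomial

namespace OrbitSumAux

variable (p : ℕ) {n : ℕ} (k : Type*) [Field k]

/-- Divide all exponents by `p`. -/
noncomputable def divp (m : Fin n →₀ ℕ) : Fin n →₀ ℕ :=
  m.mapRange (· / p) (Nat.zero_div p)

variable {p k}

theorem divp_apply (m : Fin n →₀ ℕ) (i : Fin n) : divp p m i = m i / p :=
  rfl

theorem divp_smul (hp : 0 < p) (m : Fin n →₀ ℕ) : divp p (p • m) = m := by
  ext i
  simp [divp_apply, Nat.mul_div_cancel_left _ hp]

theorem divp_add_smul (hp : 0 < p) (m b : Fin n →₀ ℕ) :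
    divp p (m + p • b) = divp p m + b := by
  ext i
  simp [divp_apply, Nat.add_mul_div_left _ _ hp]

theorem cond_iff (hp : 0 < p) (m : Fin n →₀ ℕ) :
    p • divp p m = m ↔ ∃ m', m = p • m' := by
  constructor
  · exact fun h => ⟨divp p m, h.symm⟩
  · rintro ⟨m', rfl⟩
    rw [divp_smul hp]

theorem cond_add_smul (hp : 0 < p) (m b : Fin n →₀ ℕ) :
    p • divp p (m + p • b) = m + p • b ↔ p • divp p m = m := by
  rw [divp_add_smul hp, smul_add]
  constructor
  · intro h
    have := add_right_cancel h
    exact this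
  · intro h; rw [h]

variable (p k) in
/-- The splitting on coefficients: `monomial m c ↦ monomial (m/p) c` if `p ∣ m`, else `0`. -/
noncomputable def psi (f : MvPolynomial (Fin n) k) : MvPolynomial (Fin n) k :=
  ∑ m ∈ f.support,
    if p • divp p m = m then monomial (divp p m) (coeff m f) else 0

theorem psi_eq_sum (f : MvPolynomial (Fin n) k) {S : Finset (Fin n →₀ ℕ)}
    (hS : f.support ⊆ S) :
    psi p k f = ∑ m ∈ S,
      if p • divp p m = m then monomial (divp p m) (coeff m f) else 0 := by
  refine Finset.sum_subset hS fun m _ hm => ?_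
  rw [MvPolynomial.notMem_support_iff] at hm
  simp [hm]

theorem psi_add (f g : MvPolynomial (Fin n) k) :
    psi p k (f + g) = psi p k f + psi p k g := by
  rw [psi_eq_sum (f + g) (Finset.Subset.trans (MvPolynomial.support_add) le_rfl),
    psi_eq_sum f (Finset.subset_union_left (s₂ := g.support)),
    psi_eq_sum g (Finset.subset_union_right (s₁ := f.support)),
    ← Finset.sum_add_distrib]
  refine Finset.sum_congr rfl fun m _ => ?_
  split <;> simp [coeff_add, map_add]

theorem psi_monomial (m : Fin n →₀ ℕ) (c : k) :
    psi p k (monomial m c) =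
      if p • divp p m = m then monomial (divp p m) c else 0 := by
  rw [psi_eq_sum (monomial m c) (MvPolynomial.support_monomial_subset)]
  simp [coeff_monomial]

end OrbitSumAux

namespace OrbitSumAux

variable {p n : ℕ} {k : Type*} [Field k]

theorem psi_zero : psi p k (0 : MvPolynomial (Fin n) k) = 0 := by
  simp [psi]

/-- `psi` as an additive monoid hom. -/
noncomputable def psiHom (p : ℕ) (k : Type*) [Field k] {n : ℕ} :
    MvPolynomial (Fin n) k →+ MvPolynomial (Fin n) k :=
  AddMonoidHom.mk' (psi p k) psi_add

theorem psi_sum {ι : Type*} (s : Finset ι) (f : ι → MvPolynomial (Fin n) k) :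
    psi p k (∑ i ∈ s, f i) = ∑ i ∈ s, psi p k (f i) :=
  map_sum (psiHom p k) f s

theorem equivMapDomain_smul (σ : Equiv.Perm (Fin n)) (c : ℕ) (m : Fin n →₀ ℕ) :
    Finsupp.equivMapDomain σ (c • m) = c • Finsupp.equivMapDomain σ m := by
  ext i
  simp [Finsupp.equivMapDomain_apply]

theorem psi_monomial_smul (hp : 0 < p) (m : Fin n →₀ ℕ) (c : k) :
    psi p k (monomial (p • m) c) = monomial m c := by
  rw [psi_monomial, if_pos, divp_smul hp]
  rw [divp_smul hp]

theorem psi_monomial_add_smul (hp : 0 < p) (a b : Fin n →₀ ℕ) (c : k) :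
    psi p k (monomial (a + p • b) c) = monomial b 1 * psi p k (monomial a c) := by
  rw [psi_monomial, psi_monomial]
  by_cases h : p • divp p a = a
  · rw [if_pos ((cond_add_smul hp a b).mpr h), if_pos h, divp_add_smul hp]
    simp [monomial_mul, add_comm]
  · rw [if_neg (fun hc => h ((cond_add_smul hp a b).mp hc)), if_neg h, mul_zero]

theorem smul_injective (hp : 0 < p) :
    Function.Injective (fun m : Fin n →₀ ℕ => p • m) := by
  intro a b hab
  have := congrArg (divp p) hab
  rwa [divp_smul hp, divp_smul hp] at this

/-- The orbit of `p • m'` is the image under `p • ·` of the orbit of `m'`. -/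
theorem orbit_smul (m' : Fin n →₀ ℕ) :
    Finset.image (fun σ : Equiv.Perm (Fin n) => Finsupp.equivMapDomain σ (p • m'))
        Finset.univ =
      (Finset.image (fun σ : Equiv.Perm (Fin n) => Finsupp.equivMapDomain σ m')
        Finset.univ).image (fun m => p • m) := by
  rw [Finset.image_image]
  refine Finset.image_congr fun σ _ => ?_
  exact equivMapDomain_smul σ p m'

theorem psi_orbit_sum_smul (hp : 0 < p) (m' : Fin n →₀ ℕ) :
    psi p k (∑ e ∈ Finset.image
        (fun σ : Equiv.Perm (Fin n) => Finsupp.equivMapDomain σ (p • m'))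
        Finset.univ, monomial e (1 : k)) =
      ∑ e ∈ Finset.image
        (fun σ : Equiv.Perm (Fin n) => Finsupp.equivMapDomain σ m')
        Finset.univ, monomial e (1 : k) := by
  rw [orbit_smul, psi_sum,
    Finset.sum_image (fun a _ b _ h => smul_injective hp h)]
  exact Finset.sum_congr rfl fun a _ => psi_monomial_smul hp a 1

theorem psi_orbit_sum_not (hp : 0 < p) (m : Fin n →₀ ℕ)
    (h : ¬ ∃ m', m = p • m') :
    psi p k (∑ e ∈ Finset.image
        (fun σ : Equiv.Perm (Fin n) => Finsupp.equivMapDomain σ m)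
        Finset.univ, monomial e (1 : k)) = 0 := by
  rw [psi_sum]
  refine Finset.sum_eq_zero fun e he => ?_
  obtain ⟨σ, -, rfl⟩ := Finset.mem_image.mp he
  rw [psi_monomial, if_neg]
  intro hc
  exact h ⟨Finsupp.equivMapDomain σ.symm (divp p (Finsupp.equivMapDomain σ m)), by
    have := congrArg (Finsupp.equivMapDomain σ.symm) hc
    rw [equivMapDomain_smul] at this
    have h2 : Finsupp.equivMapDomain σ.symm (Finsupp.equivMapDomain σ m) = m := by
      ext i; simp [Finsupp.equivMapDomain_apply]
    rw [h2] at this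
    exact this.symm⟩

end OrbitSumAux

namespace OrbitSumAux

variable {p n : ℕ} {k : Type*} [Field k]

theorem orbit_sum_pow [Fact p.Prime] [CharP k p] (m' : Fin n →₀ ℕ) :
    (∑ e ∈ Finset.image
        (fun σ : Equiv.Perm (Fin n) => Finsupp.equivMapDomain σ m')
        Finset.univ, monomial e (1 : k)) ^ p =
      ∑ e ∈ Finset.image
        (fun σ : Equiv.Perm (Fin n) => Finsupp.equivMapDomain σ (p • m'))
        Finset.univ, monomial e (1 : k) := by
  have hp : 0 < p := (Fact.out : p.Prime).pos
  calc (∑ e ∈ Finset.image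
        (fun σ : Equiv.Perm (Fin n) => Finsupp.equivMapDomain σ m')
        Finset.univ, monomial e (1 : k)) ^ p
      = frobenius (MvPolynomial (Fin n) k) p (∑ e ∈ Finset.image
        (fun σ : Equiv.Perm (Fin n) => Finsupp.equivMapDomain σ m')
        Finset.univ, monomial e (1 : k)) := (frobenius_def p _).symm
    _ = ∑ e ∈ Finset.image
        (fun σ : Equiv.Perm (Fin n) => Finsupp.equivMapDomain σ m')
        Finset.univ, monomial (p • e) (1 : k) := by
          rw [map_sum]
          exact Finset.sum_congr rfl fun e _ => by
            rw [frobenius_def, monomial_pow, one_pow]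
    _ = _ := by
          rw [orbit_smul, Finset.sum_image (fun a _ b _ h => smul_injective hp h)]

end OrbitSumAux

/-- Let `k` be a field of characteristic `p > 0` and `n < p`. In
`k[x_1,…,x_n]^{S_n}`, the Frobenius sends any symmetric `f` to `f^p`, and the orbit-sum
Frobenius splitting `Ψ` (with `Ψ(T m) = T n'` if `m = p • n'`, else `0`, extended
additively) satisfies `Ψ(T m · T m'^p) = T m' · Ψ(T m)` for all monomials `m, m'`. -/
theorem orbit_sum_splitting_few_variables (p : ℕ) [hp : Fact p.Prime]
    (k : Type*) [Field k] [CharP k p] (n : ℕ) (hn : n < p)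
    (T : (Fin n →₀ ℕ) → MvPolynomial (Fin n) k)
    (hT : ∀ m, T m = ∑ m' ∈ Finset.image
      (fun σ : Equiv.Perm (Fin n) => Finsupp.equivMapDomain σ m) Finset.univ,
      monomial m' (1 : k)) :
    (∀ f : MvPolynomial (Fin n) k, f.IsSymmetric →
      frobenius (MvPolynomial (Fin n) k) p f = f ^ p) ∧
    ∃ Ψ : MvPolynomial (Fin n) k → MvPolynomial (Fin n) k,
      (∀ a b, Ψ (a + b) = Ψ a + Ψ b) ∧
      (∀ m m' : Fin n →₀ ℕ, m = p • m' → Ψ (T m) = T m') ∧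
      (∀ m : Fin n →₀ ℕ, (¬ ∃ m', m = p • m') → Ψ (T m) = 0) ∧
      (∀ m m' : Fin n →₀ ℕ, Ψ (T m * T m' ^ p) = T m' * Ψ (T m)) := by
  have hp0 : 0 < p := hp.out.pos
  refine ⟨fun f _ => frobenius_def p f, OrbitSumAux.psi p k, OrbitSumAux.psi_add, ?_, ?_, ?_⟩
  · rintro m m' rfl
    rw [hT, hT m', OrbitSumAux.psi_orbit_sum_smul hp0]
  · intro m h
    rw [hT]
    exact OrbitSumAux.psi_orbit_sum_not hp0 m h
  · intro m m'
    rw [hT m, hT m', OrbitSumAux.orbit_sum_pow, OrbitSumAux.orbit_smul,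
      Finset.sum_mul_sum, OrbitSumAux.psi_sum]
    have key : ∀ a : Fin n →₀ ℕ,
        OrbitSumAux.psi p k (∑ e ∈ (Finset.image
          (fun σ : Equiv.Perm (Fin n) => Finsupp.equivMapDomain σ m')
          Finset.univ).image (fun x => p • x),
            monomial a (1 : k) * monomial e (1 : k)) =
        (∑ b ∈ Finset.image
          (fun σ : Equiv.Perm (Fin n) => Finsupp.equivMapDomain σ m')
          Finset.univ, monomial b (1 : k)) * OrbitSumAux.psi p k (monomial a (1 : k)) := by
      intro a
      rw [Finset.sum_image (fun x _ y _ h => OrbitSumAux.smul_injective hp0 h),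
        OrbitSumAux.psi_sum, Finset.sum_mul]
      refine Finset.sum_congr rfl fun b _ => ?_
      rw [monomial_mul, one_mul, OrbitSumAux.psi_monomial_add_smul hp0]
    rw [Finset.sum_congr rfl fun a _ => key a, ← Finset.mul_sum, ← OrbitSumAux.psi_sum]
end

section
/- Let K be a commutative ring, S a commutative K-algebra, and γ^d(s) = s^{⊗d} ∈ Γ^d(S) = (S^{⊗d})^{S_d}. Then for all s, t ∈ S and d ≥ 0: γ^d(s+t) = Σ_{d_1+d_2=d} γ^{d_1}(s) × γ^{d_2}(t), where × is the shuffle product. -/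
open scoped TensorProduct
open PiTensorProduct

/-- The shuffle product `x × y = ∑_{σ ∈ Sh(d,e)} σ (x ⊗ y)`. -/
noncomputable def shuffleMul (K S : Type*) [CommRing K] [CommRing S] [Algebra K S]
    (d e : ℕ) (x : ⨂[K]^d S) (y : ⨂[K]^e S) : ⨂[K]^(d + e) S :=
  ∑ σ ∈ Finset.univ.filter (fun σ : Equiv.Perm (Fin (d + e)) =>
      (∀ a b : Fin (d + e), a < b → (b : ℕ) < d → σ a < σ b) ∧
      (∀ a b : Fin (d + e), a < b → d ≤ (a : ℕ) → σ a < σ b)),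
    PiTensorProduct.reindex K (fun _ => S) σ (TensorPower.mulEquiv (x ⊗ₜ[K] y))

/-- The divided power `γ^d(s) = s^{⊗d} ∈ Γ^d(S)`. -/
noncomputable def dividedPower (K S : Type*) [CommRing K] [CommRing S] [Algebra K S]
    (d : ℕ) (s : S) : ⨂[K]^d S :=
  PiTensorProduct.tprod K (fun _ : Fin d => s)


section AuxShuffle
open Finset Equiv

section Shuffle

lemma append_const {α : Type*} {n m : ℕ} (s t : α) (j : Fin (n + m)) :
    Fin.append (fun _ : Fin n => s) (fun _ : Fin m => t) j
      = if (j : ℕ) < n then s else t := by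
  have hj := j.2
  rcases lt_or_ge (j : ℕ) n with h | h
  · rw [if_pos h]
    have hjj : j = Fin.castAdd m ⟨(j : ℕ), h⟩ := by ext; simp
    rw [hjj, Fin.append_left]
  · rw [if_neg (not_lt.mpr h)]
    have hjj : j = Fin.natAdd n ⟨(j : ℕ) - n, by omega⟩ := by ext; simp; omega
    rw [hjj, Fin.append_right]

/-- The set of positions occupied by the first block. -/
noncomputable def bset {n : ℕ} (d1 : ℕ) (σ : Equiv.Perm (Fin n)) : Finset (Fin n) :=
  Finset.univ.filter (fun j => ((σ.symm j : Fin n) : ℕ) < d1)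

lemma bset_eq_map {n d1 : ℕ} (σ : Equiv.Perm (Fin n)) :
    bset d1 σ = (Finset.univ.filter (fun i : Fin n => (i : ℕ) < d1)).map
      ⟨σ, σ.injective⟩ := by
  ext j
  simp only [bset, mem_filter, mem_map, Function.Embedding.coeFn_mk, mem_univ, true_and]
  constructor
  · intro h
    exact ⟨σ.symm j, h, σ.apply_symm_apply j⟩
  · rintro ⟨i, hi, rfl⟩
    simpa using hi

lemma card_filter_val_lt {n d1 : ℕ} (h : d1 ≤ n) :
    (Finset.univ.filter (fun i : Fin n => (i : ℕ) < d1)).card = d1 := by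
  have : (Finset.univ.filter (fun i : Fin n => (i : ℕ) < d1))
      = (Finset.univ : Finset (Fin d1)).map (Fin.castLEEmb h) := by
    ext j
    simp only [mem_filter, mem_univ, true_and, mem_map, Fin.castLEEmb]
    constructor
    · intro hj
      exact ⟨⟨j, hj⟩, by simp [Fin.castLE, Fin.ext_iff]⟩
    · rintro ⟨i, -, rfl⟩
      simpa using i.2
  rw [this, card_map, card_univ, Fintype.card_fin]

lemma card_bset {d1 d2 : ℕ} (σ : Equiv.Perm (Fin (d1 + d2))) :
    (bset d1 σ).card = d1 := by
  rw [bset_eq_map, card_map, card_filter_val_lt (Nat.le_add_right d1 d2)]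

lemma card_bset_compl {d1 d2 : ℕ} (σ : Equiv.Perm (Fin (d1 + d2))) :
    (bset d1 σ)ᶜ.card = d2 := by
  rw [card_compl, card_bset, Fintype.card_fin]
  omega

/-- shuffle conditions -/
def IsShuffle (d1 : ℕ) {n : ℕ} (σ : Equiv.Perm (Fin n)) : Prop :=
  (∀ a b : Fin n, a < b → (b : ℕ) < d1 → σ a < σ b) ∧
  (∀ a b : Fin n, a < b → d1 ≤ (a : ℕ) → σ a < σ b)

lemma orderEmbOfFin_congr {α : Type*} [LinearOrder α] {s t : Finset α} {k : ℕ}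
    (hst : s = t) (hs : s.card = k) :
    ⇑(s.orderEmbOfFin hs) = ⇑(t.orderEmbOfFin (hst ▸ hs)) := by subst hst; rfl

lemma shuffle_eq_of_bset_eq {d1 d2 : ℕ} {σ τ : Equiv.Perm (Fin (d1 + d2))}
    (hσ : IsShuffle d1 σ) (hτ : IsShuffle d1 τ) (hB : bset d1 σ = bset d1 τ) : σ = τ := by
  have key : ∀ (ρ : Equiv.Perm (Fin (d1 + d2))), IsShuffle d1 ρ →
      ((fun i : Fin d1 => ρ (Fin.castAdd d2 i))
        = (bset d1 ρ).orderEmbOfFin (card_bset ρ)) ∧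
      ((fun i : Fin d2 => ρ (Fin.natAdd d1 i))
        = (bset d1 ρ)ᶜ.orderEmbOfFin (card_bset_compl ρ)) := by
    intro ρ hρ
    constructor
    · refine Finset.orderEmbOfFin_unique _ (fun i => ?_) (fun a b hab => ?_)
      · simp only [bset, mem_filter, mem_univ, true_and, Equiv.symm_apply_apply]
        simpa using i.2
      · refine hρ.1 _ _ ?_ (by simpa using b.2)
        simp only [Fin.lt_def, Fin.coe_castAdd]
        exact hab
    · refine Finset.orderEmbOfFin_unique _ (fun i => ?_) (fun a b hab => ?_)
      · simp only [mem_compl, bset, mem_filter, mem_univ, true_and,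
          Equiv.symm_apply_apply, not_lt, Fin.natAdd]
        omega
      · refine hρ.2 _ _ ?_ (by simp)
        simp only [Fin.lt_def, Fin.coe_natAdd]
        have := (Fin.lt_def ..).mp hab
        omega
  obtain ⟨h1σ, h2σ⟩ := key σ hσ
  obtain ⟨h1τ, h2τ⟩ := key τ hτ
  rw [orderEmbOfFin_congr hB] at h1σ
  rw [orderEmbOfFin_congr (by rw [hB])] at h2σ
  ext i
  rcases lt_or_ge (i : ℕ) d1 with hi | hi
  · have : i = Fin.castAdd d2 ⟨(i : ℕ), hi⟩ := by ext; simp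
    rw [this]
    have := congrFun (h1σ.trans h1τ.symm) ⟨(i : ℕ), hi⟩
    exact congrArg Fin.val this
  · have hi2 : (i : ℕ) - d1 < d2 := by omega
    have : i = Fin.natAdd d1 ⟨(i : ℕ) - d1, hi2⟩ := by ext; simp; omega
    rw [this]
    have := congrFun (h2σ.trans h2τ.symm) ⟨(i : ℕ) - d1, hi2⟩
    exact congrArg Fin.val this

end Shuffle

section PermOf
variable {d : ℕ}

lemma card_compl_eq (A : Finset (Fin d)) : Aᶜ.card = d - A.card := by
  rw [card_compl, Fintype.card_fin]

lemma cardAddCardCompl (A : Finset (Fin d)) : A.card + (d - A.card) = d := by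
  have := Finset.card_le_univ A
  rw [Fintype.card_fin] at this
  omega

noncomputable def permOfAux (A : Finset (Fin d)) : Fin (A.card + (d - A.card)) → Fin d :=
  fun i =>
    if h : (i : ℕ) < A.card then A.orderEmbOfFin rfl ⟨i, h⟩
    else Aᶜ.orderEmbOfFin (card_compl_eq A) ⟨(i : ℕ) - A.card, by have := i.2; omega⟩

lemma permOfAux_bijective (A : Finset (Fin d)) : Function.Bijective (permOfAux A) := by
  rw [Fintype.bijective_iff_injective_and_card]
  refine ⟨fun i j hij => ?_, by simp [cardAddCardCompl]⟩
  unfold permOfAux at hij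
  split_ifs at hij with hi hj hj
  · have := (A.orderEmbOfFin rfl).injective hij
    simp only [Fin.mk.injEq] at this
    exact Fin.ext this
  · exact absurd (hij ▸ A.orderEmbOfFin_mem rfl _)
      (mem_compl.mp (Aᶜ.orderEmbOfFin_mem (card_compl_eq A) _))
  · exact absurd (hij.symm ▸ A.orderEmbOfFin_mem rfl _)
      (mem_compl.mp (Aᶜ.orderEmbOfFin_mem (card_compl_eq A) _))
  · have := (Aᶜ.orderEmbOfFin (card_compl_eq A)).injective hij
    simp only [Fin.mk.injEq] at this
    exact Fin.ext (by omega)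

noncomputable def permOf (A : Finset (Fin d)) :
    Equiv.Perm (Fin (A.card + (d - A.card))) :=
  (Equiv.ofBijective _ (permOfAux_bijective A)).trans
    (finCongr (cardAddCardCompl A)).symm

lemma permOf_apply_val (A : Finset (Fin d)) (i : Fin (A.card + (d - A.card))) :
    ((permOf A) i : ℕ) = (permOfAux A i : ℕ) := by
  simp [permOf, Equiv.ofBijective, finCongr]

lemma isShuffle_permOf (A : Finset (Fin d)) : IsShuffle A.card (permOf A) := by
  constructor
  · intro a b hab hb
    have ha : (a : ℕ) < A.card := lt_trans ((Fin.lt_def ..).mp hab) hb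
    rw [Fin.lt_def, permOf_apply_val, permOf_apply_val]
    unfold permOfAux
    rw [dif_pos ha, dif_pos hb]
    exact (A.orderEmbOfFin rfl).strictMono (show _ < _ from (Fin.lt_def ..).mp hab)
  · intro a b hab ha
    have hb : A.card ≤ (b : ℕ) := le_trans ha (le_of_lt ((Fin.lt_def ..).mp hab))
    rw [Fin.lt_def, permOf_apply_val, permOf_apply_val]
    unfold permOfAux
    rw [dif_neg (by omega), dif_neg (by omega)]
    refine (Aᶜ.orderEmbOfFin (card_compl_eq A)).strictMono ?_
    have := (Fin.lt_def ..).mp hab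
    simp only [Fin.mk_lt_mk]
    omega

lemma permOfAux_symm_apply (A : Finset (Fin d)) (i : Fin d) :
    permOfAux A ((permOf A).symm ((finCongr (cardAddCardCompl A)).symm i)) = i := by
  have h1 : permOf A ((permOf A).symm ((finCongr (cardAddCardCompl A)).symm i))
      = (finCongr (cardAddCardCompl A)).symm i := Equiv.apply_symm_apply _ _
  have h2 : ∀ j, permOf A j = (finCongr (cardAddCardCompl A)).symm (permOfAux A j) :=
    fun j => by simp [permOf, Equiv.ofBijective]
  rw [h2] at h1
  exact (finCongr (cardAddCardCompl A)).symm.injective h1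

lemma permOf_symm_lt_iff (A : Finset (Fin d)) (i : Fin d) :
    (((permOf A).symm ((finCongr (cardAddCardCompl A)).symm i) : Fin _) : ℕ) < A.card
      ↔ i ∈ A := by
  set j := (permOf A).symm ((finCongr (cardAddCardCompl A)).symm i) with hj
  have hji : permOfAux A j = i := permOfAux_symm_apply A i
  constructor
  · intro h
    rw [← hji]
    unfold permOfAux
    rw [dif_pos h]
    exact A.orderEmbOfFin_mem rfl _
  · intro h
    by_contra hlt
    have : permOfAux A j ∈ Aᶜ := by
      unfold permOfAux
      rw [dif_neg hlt]
      exact Aᶜ.orderEmbOfFin_mem (card_compl_eq A) _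
    rw [hji] at this
    exact mem_compl.mp this h

end PermOf

lemma filter_eq_map_bset {d1 d2 dd : ℕ} (hq : d1 + d2 = dd) (σ : Equiv.Perm (Fin (d1 + d2))) :
    (Finset.univ.filter (fun i : Fin dd =>
        ((σ.symm ((finCongr hq).symm i) : Fin (d1 + d2)) : ℕ) < d1))
      = (bset d1 σ).map (finCongr hq).toEmbedding := by
  ext i
  simp only [mem_filter, mem_univ, true_and, mem_map, bset, Equiv.coe_toEmbedding]
  constructor
  · intro h
    exact ⟨(finCongr hq).symm i, by simpa using h, Equiv.apply_symm_apply _ _⟩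
  · rintro ⟨j, hj, rfl⟩
    simpa using hj

end AuxShuffle

/-- `γ^d(s+t) = ∑_{d₁+d₂=d} γ^{d₁}(s) × γ^{d₂}(t)` where `×` is the shuffle
product (each summand transported along `Fin (d₁+d₂) ≃ Fin d`). -/
theorem dividedPower_add (K S : Type*) [CommRing K] [CommRing S] [Algebra K S]
    (d : ℕ) (s t : S) :
    dividedPower K S d (s + t) =
      ∑ q ∈ (Finset.HasAntidiagonal.antidiagonal d).attach,
        PiTensorProduct.reindex K (fun _ => S)
          (finCongr (Finset.HasAntidiagonal.mem_antidiagonal.mp q.2))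
          (shuffleMul K S q.1.1 q.1.2 (dividedPower K S q.1.1 s) (dividedPower K S q.1.2 t)) := by
  classical
  have step2 : ∀ (q : {x // x ∈ Finset.HasAntidiagonal.antidiagonal d}),
      PiTensorProduct.reindex K (fun _ => S) (finCongr (Finset.HasAntidiagonal.mem_antidiagonal.mp q.2))
        (shuffleMul K S q.1.1 q.1.2 (dividedPower K S q.1.1 s) (dividedPower K S q.1.2 t))
      = ∑ σ ∈ Finset.univ.filter (fun σ : Equiv.Perm (Fin (q.1.1 + q.1.2)) =>
            (∀ a b : Fin (q.1.1 + q.1.2), a < b → (b : ℕ) < q.1.1 → σ a < σ b) ∧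
            (∀ a b : Fin (q.1.1 + q.1.2), a < b → q.1.1 ≤ (a : ℕ) → σ a < σ b)),
          PiTensorProduct.tprod K (fun i : Fin d =>
            if ((σ.symm ((finCongr (Finset.HasAntidiagonal.mem_antidiagonal.mp q.2)).symm i)
                : Fin (q.1.1 + q.1.2)) : ℕ) < q.1.1 then s else t) := by
    intro q
    rw [shuffleMul, map_sum]
    refine Finset.sum_congr rfl fun σ _ => ?_
    have hmul : (TensorPower.mulEquiv
        ((PiTensorProduct.tprod K (fun _ : Fin q.1.1 => s)) ⊗ₜ[K]
         (PiTensorProduct.tprod K (fun _ : Fin q.1.2 => t))))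
        = PiTensorProduct.tprod K (Fin.append (fun _ => s) (fun _ => t)) :=
      TensorPower.tprod_mul_tprod K _ _
    rw [dividedPower, dividedPower, hmul, PiTensorProduct.reindex_tprod,
      PiTensorProduct.reindex_tprod]
    congr 1
    funext i
    rw [append_const]
  have lhs : dividedPower K S d (s + t)
      = ∑ A ∈ (Finset.univ : Finset (Finset (Fin d))),
          PiTensorProduct.tprod K (A.piecewise (fun _ => s) (fun _ => t)) := by
    rw [dividedPower]
    have h0 : (fun _ : Fin d => s + t) = (fun _ : Fin d => s) + (fun _ : Fin d => t) := rfl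
    rw [h0, MultilinearMap.map_add_univ]
  rw [lhs, Finset.sum_congr rfl fun q _ => step2 q, Finset.sum_sigma']
  refine (Finset.sum_bij (fun p _ => Finset.univ.filter fun i : Fin d =>
      ((p.2.symm ((finCongr (Finset.HasAntidiagonal.mem_antidiagonal.mp p.1.2)).symm i)
        : Fin (p.1.1.1 + p.1.1.2)) : ℕ) < p.1.1.1) ?_ ?_ ?_ ?_).symm
  · exact fun _ _ => Finset.mem_univ _
  · rintro ⟨⟨⟨a1, b1⟩, hq1⟩, σ1⟩ hp1 ⟨⟨⟨a2, b2⟩, hq2⟩, σ2⟩ hp2 heq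
    have hd1 : a1 + b1 = d := Finset.HasAntidiagonal.mem_antidiagonal.mp hq1
    have hd2 : a2 + b2 = d := Finset.HasAntidiagonal.mem_antidiagonal.mp hq2
    simp only at heq
    rw [filter_eq_map_bset hd1 σ1, filter_eq_map_bset hd2 σ2] at heq
    have hcard : a1 = a2 := by
      have := congrArg Finset.card heq
      rwa [Finset.card_map, Finset.card_map, card_bset, card_bset] at this
    subst hcard
    have hb : b1 = b2 := by omega
    subst hb
    have hbset : bset a1 σ1 = bset a1 σ2 :=
      Finset.map_injective (finCongr hd1).toEmbedding heq
    have hs1 : IsShuffle a1 σ1 := (Finset.mem_filter.mp (Finset.mem_sigma.mp hp1).2).2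
    have hs2 : IsShuffle a1 σ2 := (Finset.mem_filter.mp (Finset.mem_sigma.mp hp2).2).2
    have : σ1 = σ2 := shuffle_eq_of_bset_eq hs1 hs2 hbset
    subst this
    rfl
  · intro A _
    refine ⟨⟨⟨(A.card, d - A.card),
        Finset.HasAntidiagonal.mem_antidiagonal.mpr (cardAddCardCompl A)⟩, permOf A⟩, ?_, ?_⟩
    · rw [Finset.mem_sigma]
      exact ⟨Finset.mem_attach _ _, Finset.mem_filter.mpr
        ⟨Finset.mem_univ _, (isShuffle_permOf A).1, (isShuffle_permOf A).2⟩⟩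
    · ext i
      simp only [Finset.mem_filter, Finset.mem_univ, true_and]
      exact permOf_symm_lt_iff A i
  · intro p hp
    congr 1
    funext i
    by_cases h : ((p.2.symm ((finCongr (Finset.HasAntidiagonal.mem_antidiagonal.mp p.1.2)).symm i)
        : Fin (p.1.1.1 + p.1.1.2)) : ℕ) < p.1.1.1
    · rw [if_pos h, Finset.piecewise_eq_of_mem _ _ _
        (by simp only [Finset.mem_filter, Finset.mem_univ, true_and]; exact h)]
    · rw [if_neg h, Finset.piecewise_eq_of_notMem _ _ _
        (by simp only [Finset.mem_filter, Finset.mem_univ, true_and]; exact h)]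
end
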